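/- Let V be a finite set of n nodes and P = (p_1, …, p_m), m > 1, a consistent set of monitoring paths where p_i has length d_i (number of nodes). Set N_max = min{Σ_{i=1}^{m} d_i, 2·m·(m−1)} (equivalently m·min{d̄, 2(m−1)} for average length d̄) and i_max = max{k ∈ ℕ : Σ_{i=1}^{k} i·C(m,i) ≤ N_max}. Then the number of identifiable nodes is at most min{Σ_{i=1}^{i_max} C(m,i) + ⌊(N_max − Σ_{i=1}^{i_max} i·C(m,i))/(i_max + 1)⌋, n}. -/

import Mathlib

/-!
Identifiable nodes have pairwise distinct nonempty encodings, so their encodings form a family `E`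
of distinct nonempty subsets of the `m` paths, and `∑ e ∈ E, #e` is the sum over the paths of
the number of identifiable nodes on them. A path `p i` carries at most `d i` of them, and, by consistency, at most `2 (m - 1)`:
the stretches of `p i` met by the other paths are intervals, and an identifiable node met by
another path sits where one of these intervals begins or just after one ends, while at most one
identifiable node lies on `p i` alone.

Given `∑ e ∈ E, #e ≤ N_max`, the weight `#e - (i_max + 1)` is negative exactly on the nonempty sets of
size at most `i_max`, so its sum over `E` is at least its sum over all those sets; this rearranges
to the bound.
-/

/-- The contiguous segment of the list `l` between (the first occurrences of) the
nodes `u` and `w`, inclusive, taken in the order of `l`. -/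
def seg {V : Type*} [DecidableEq V] (l : List V) (u w : V) : List V :=
  (l.drop (min (l.idxOf u) (l.idxOf w))).take
    (max (l.idxOf u) (l.idxOf w) - min (l.idxOf u) (l.idxOf w) + 1)

/-- Two paths are consistent if, for any two nodes `u, w` appearing on both, the
contiguous segment of one between `u` and `w` equals, up to reversal, the
contiguous segment of the other between `u` and `w`. -/
def ConsistentPair {V : Type*} [DecidableEq V] (l l' : List V) : Prop :=
  ∀ u w : V, u ∈ l → w ∈ l → u ∈ l' → w ∈ l' →
    seg l u w = seg l' u w ∨ seg l u w = (seg l' u w).reverse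

/-- A family of paths is consistent if every two of its paths are consistent. -/
def Consistent {V : Type*} [DecidableEq V] {ι : Type*} (p : ι → List V) : Prop :=
  ∀ i j, ConsistentPair (p i) (p j)

/-- The encoding of a node `v` w.r.t. monitoring paths `p`. -/
def encoding {V : Type*} [DecidableEq V] {m : ℕ} (p : Fin m → List V) (v : V) :
    Finset (Fin m) :=
  Finset.univ.filter fun i => v ∈ p i

/-- A node is identifiable iff its encoding is nonempty and distinct from the
encoding of every other node. -/
def Identifiable {V : Type*} [DecidableEq V] {m : ℕ} (p : Fin m → List V) (v : V) :
    Prop :=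
  encoding p v ≠ ∅ ∧ ∀ w : V, w ≠ v → encoding p w ≠ encoding p v

/-- `i_max = max {k : Σ_{i=1}^k i·C(m,i) ≤ N}` (the partial sums are constant beyond
`k = m` since `C(m,i) = 0` for `i > m`, so the maximum is realized within `{0,…,m}`). -/
def imax (m N : ℕ) : ℕ :=
  Nat.findGreatest (fun k => ∑ i ∈ Finset.Icc 1 k, i * m.choose i ≤ N) m

/-- `Σ_{i=1}^{i_max} C(m,i) + ⌊(N − Σ_{i=1}^{i_max} i·C(m,i)) / (i_max + 1)⌋`. -/
def boundFormula (m N : ℕ) : ℕ :=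
  (∑ i ∈ Finset.Icc 1 (imax m N), m.choose i) +
    (N - ∑ i ∈ Finset.Icc 1 (imax m N), i * m.choose i) / (imax m N + 1)

open Finset

section Boundaries

/-- `IsBoundaryOf S true t`: `S` begins at `t`; `IsBoundaryOf S false t`: `S` ends at `t - 1`. -/
def IsBoundaryOf (S : Set ℕ) : Bool → ℕ → Prop
  | true, t => t ∈ S ∧ ∀ u, u + 1 = t → u ∉ S
  | false, t => t ∉ S ∧ ∃ u ∈ S, u + 1 = t

variable {S : Set ℕ}

lemma Set.OrdConnected.le_of_isBoundaryOf (hS : S.OrdConnected) {b : Bool} {t t' : ℕ}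
    (h : IsBoundaryOf S b t) (h' : IsBoundaryOf S b t') : t' ≤ t := by
  by_contra! hlt
  cases b with
  | true =>
    obtain ⟨u, hu⟩ : ∃ u, u + 1 = t' := ⟨t' - 1, by omega⟩
    exact h'.2 u hu (hS.out h.1 h'.1 ⟨by omega, by omega⟩)
  | false =>
    obtain ⟨u', hu'S, rfl⟩ := h'.2
    obtain ⟨u, huS, rfl⟩ := h.2
    exact h.1 (hS.out huS hu'S ⟨by omega, by omega⟩)

lemma Set.OrdConnected.isBoundaryOf_unique (hS : S.OrdConnected) {b : Bool} {t t' : ℕ}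
    (h : IsBoundaryOf S b t) (h' : IsBoundaryOf S b t') : t = t' :=
  le_antisymm (hS.le_of_isBoundaryOf h' h) (hS.le_of_isBoundaryOf h h')

lemma Set.OrdConnected.lt_of_isBoundaryOf_false (hS : S.OrdConnected) {M t : ℕ} (hM : M ∈ S)
    (h : IsBoundaryOf S false t) : M < t := by
  by_contra! hle
  obtain ⟨u, huS, rfl⟩ := h.2
  exact h.1 (hS.out huS hM ⟨by omega, hle⟩)

lemma exists_isBoundaryOf {ι : Type*} (s : Finset ι) (I : ι → Set ℕ) {t : ℕ}
    (hcov : ∃ j ∈ s, t ∈ I j)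
    (hchange : ∀ u, u + 1 = t → ∃ j ∈ s, ¬(u ∈ I j ↔ t ∈ I j)) :
    ∃ j ∈ s, ∃ b, IsBoundaryOf (I j) b t := by
  cases t with
  | zero =>
    obtain ⟨j, hj, htj⟩ := hcov
    exact ⟨j, hj, true, htj, by omega⟩
  | succ u =>
    obtain ⟨j, hj, hne⟩ := hchange u rfl
    by_cases ht : u + 1 ∈ I j
    · refine ⟨j, hj, true, ht, fun v hv hvj => hne ?_⟩
      rw [Nat.succ_injective hv] at hvj
      tauto
    · exact ⟨j, hj, false, ht, u, by tauto, rfl⟩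

/-- Each point of `T` is where some interval begins or just after one ends, and the interval
containing the largest point of `T` does not end before it. -/
theorem card_le_two_mul_card_sub_one {ι : Type*} (s : Finset ι) (I : ι → Set ℕ)
    (hI : ∀ j ∈ s, (I j).OrdConnected) (T : Finset ℕ)
    (hcov : ∀ t ∈ T, ∃ j ∈ s, t ∈ I j)
    (hchange : ∀ u, u + 1 ∈ T → ∃ j ∈ s, ¬(u ∈ I j ↔ u + 1 ∈ I j)) :
    T.card ≤ 2 * s.card - 1 := by
  classical
  rcases T.eq_empty_or_nonempty with rfl | hT
  · simp
  obtain ⟨J, hJ, hMJ⟩ := hcov _ (T.max'_mem hT)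
  calc T.card ≤ ((s ×ˢ (univ : Finset Bool)).erase (J, false)).card := by
        refine card_le_card_of_forall_subsingleton (fun t x => IsBoundaryOf (I x.1) x.2 t)
          (fun t ht => ?_) fun x hx t₁ h₁ t₂ h₂ => ?_
        · obtain ⟨j, hj, b, hb⟩ := exists_isBoundaryOf s I (hcov t ht)
            fun u hu => hu ▸ hchange u (hu ▸ ht)
          refine ⟨(j, b), mem_erase.2 ⟨fun hJb => ?_, by simp [hj]⟩, hb⟩
          obtain ⟨rfl, rfl⟩ := Prod.mk.inj hJb
          exact (T.le_max' t ht).not_gt ((hI j hj).lt_of_isBoundaryOf_false hMJ hb)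
        · have hx₁ := (mem_product.1 (mem_of_mem_erase hx)).1
          exact (hI x.1 hx₁).isBoundaryOf_unique h₁.2 h₂.2
    _ = 2 * s.card - 1 := by
        rw [card_erase_of_mem (by simp [hJ]), card_product, card_univ,
          Fintype.card_bool, mul_comm]

end Boundaries

section Paths

variable {V : Type*} [DecidableEq V]

lemma seg_subset (l : List V) (u w : V) : seg l u w ⊆ l :=
  fun _ hx => List.mem_of_mem_drop (List.mem_of_mem_take hx)

lemma getElem_mem_seg {l : List V} (hl : l.Nodup) {a t b : ℕ} (hat : a ≤ t) (htb : t ≤ b)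
    (hb : b < l.length) : l[t] ∈ seg l l[a] l[b] := by
  have hab := hat.trans htb
  rw [seg, hl.idxOf_getElem, hl.idxOf_getElem, min_eq_left hab, max_eq_right hab]
  have hlen : t - a < ((l.drop a).take (b - a + 1)).length := by
    simp only [List.length_take, List.length_drop]
    omega
  have hget : ((l.drop a).take (b - a + 1))[t - a] = l[t] := by
    rw [List.getElem_take, List.getElem_drop]
    congr 1
    omega
  exact hget ▸ List.getElem_mem hlen

def coveredPositions (l l' : List V) : Set ℕ := {t | ∃ h : t < l.length, l[t] ∈ l'}

lemma idxOf_mem_coveredPositions {l l' : List V} {v : V} (hv : v ∈ l) :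
    l.idxOf v ∈ coveredPositions l l' ↔ v ∈ l' := by
  have hlt := List.idxOf_lt_length_of_mem hv
  simp only [coveredPositions, Set.mem_ofPred_eq, hlt, List.getElem_idxOf, exists_true_left]

lemma ordConnected_coveredPositions {l l' : List V} (hl : l.Nodup) (hc : ConsistentPair l l') :
    (coveredPositions l l').OrdConnected := by
  refine ⟨fun a ⟨_, ha⟩ b ⟨hb, hb'⟩ t ⟨hat, htb⟩ => ⟨htb.trans_lt hb, ?_⟩⟩
  have hseg := getElem_mem_seg hl hat htb hb
  rcases hc _ _ (List.getElem_mem _) (List.getElem_mem _) ha hb' with h | h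
  · exact seg_subset l' _ _ (h ▸ hseg)
  · exact seg_subset l' _ _ (List.mem_reverse.1 (h ▸ hseg))

end Paths

section Encodings

variable {V : Type*} [DecidableEq V] {m : ℕ} {p : Fin m → List V} {i : Fin m}

lemma mem_encoding {v : V} {j : Fin m} : j ∈ encoding p v ↔ v ∈ p j := by
  simp [encoding]

lemma Identifiable.eq_of_encoding_eq {v w : V} (hv : Identifiable p v)
    (h : encoding p w = encoding p v) : w = v :=
  (hv.2 w).mtr h

lemma sum_card_encoding (p : Fin m → List V) (S : Finset V) :
    ∑ v ∈ S, (encoding p v).card = ∑ i, (S.filter (· ∈ p i)).card := by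
  simp only [encoding, card_filter]
  exact sum_comm

/-- An identifiable node at position `t` of `p i` has an encoding different from that of the
node at `t - 1`, so the stretch of `p i` met by some other path begins at `t` or ends at `t - 1`. -/
lemma card_identifiable_shared_le (hnodup : (p i).Nodup) (hcons : Consistent p) (D : Finset V)
    (hD : ∀ v ∈ D, Identifiable p v ∧ v ∈ p i ∧ ∃ j ≠ i, v ∈ p j) :
    D.card ≤ 2 * (m - 1) - 1 := by
  have hinj : Set.InjOn (p i).idxOf D := fun v hv _ _ h => (List.idxOf_inj (hD v hv).2.1).1 h
  rw [← card_image_of_injOn hinj]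
  refine (card_le_two_mul_card_sub_one (univ.erase i) (fun j => coveredPositions (p i) (p j))
    (fun j _ => ordConnected_coveredPositions hnodup (hcons i j)) _ ?_ ?_).trans (by simp)
  · intro t ht
    obtain ⟨v, hv, rfl⟩ := mem_image.1 ht
    obtain ⟨-, hvi, j, hji, hvj⟩ := hD v hv
    exact ⟨j, mem_erase.2 ⟨hji, mem_univ j⟩, (idxOf_mem_coveredPositions hvi).2 hvj⟩
  · intro u hu
    obtain ⟨v, hv, hvu⟩ := mem_image.1 hu
    obtain ⟨hvid, hvi, -⟩ := hD v hv
    have hlt : u < (p i).length := by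
      have := List.idxOf_lt_length_of_mem hvi
      omega
    have hyv : (p i)[u] ≠ v := by
      rintro rfl
      rw [hnodup.idxOf_getElem] at hvu
      omega
    obtain ⟨j, hj⟩ : ∃ j, ¬((p i)[u] ∈ p j ↔ v ∈ p j) := by
      by_contra! h
      exact hvid.2 _ hyv (ext fun j => by simp only [mem_encoding, h j])
    have hji : j ≠ i := by
      rintro rfl
      exact hj ⟨fun _ => hvi, fun _ => List.getElem_mem hlt⟩
    refine ⟨j, mem_erase.2 ⟨hji, mem_univ j⟩, ?_⟩
    rwa [← hvu, idxOf_mem_coveredPositions hvi, coveredPositions, Set.mem_ofPred_eq,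
      exists_prop_of_true hlt]

lemma card_identifiable_on_path_le (hm : 1 < m) (hnodup : (p i).Nodup) (hcons : Consistent p)
    (D : Finset V) (hD : ∀ v ∈ D, Identifiable p v ∧ v ∈ p i) : D.card ≤ 2 * (m - 1) := by
  have hshared :=
    card_identifiable_shared_le hnodup hcons (D.filter fun v => ∃ j ≠ i, v ∈ p j)
    fun v hv => (mem_filter.1 hv).elim fun hvD hvj => ⟨(hD v hvD).1, (hD v hvD).2, hvj⟩
  have hprivate : (D.filter fun v => ¬∃ j ≠ i, v ∈ p j).card ≤ 1 := by
    have hsingle : ∀ v ∈ D.filter (fun v => ¬∃ j ≠ i, v ∈ p j), encoding p v = {i} := by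
      intro v hv
      obtain ⟨hvD, hvj⟩ := mem_filter.1 hv
      ext j
      rw [mem_encoding, mem_singleton]
      exact ⟨fun h => by_contra fun hji => hvj ⟨j, hji, h⟩, fun h => h ▸ (hD v hvD).2⟩
    refine card_le_one.2 fun v hv w hw => ?_
    exact (hD w (mem_filter.1 hw).1).1.eq_of_encoding_eq (by rw [hsingle v hv, hsingle w hw])
  rw [← card_filter_add_card_filter_not (fun v => ∃ j ≠ i, v ∈ p j)]
  omega

end Encodings

section Packing

variable {α : Type*} [Fintype α]

lemma sum_filter_card_mem_Icc (K : ℕ) (g : ℕ → ℤ) :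
    ∑ s ∈ (univ : Finset (Finset α)).filter (fun s => s.card ∈ Icc 1 K), g s.card =
      ∑ k ∈ Icc 1 K, ((Fintype.card α).choose k : ℤ) * g k := by
  rw [← sum_fiberwise_of_maps_to (g := card) fun s hs => (mem_filter.1 hs).2]
  refine sum_congr rfl fun k hk => ?_
  have hfiber : ((univ : Finset (Finset α)).filter (fun s => s.card ∈ Icc 1 K)).filter
      (fun s => s.card = k) = powersetCard k univ := by
    ext s
    simp only [mem_filter, mem_univ, true_and, mem_powersetCard_univ, and_iff_right_iff_imp]
    rintro rfl
    exact hk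
  rw [sum_congr rfl fun s hs => by rw [(mem_filter.1 hs).2], sum_const, hfiber,
    card_powersetCard, card_univ, nsmul_eq_mul]

lemma succ_mul_card_add_le (E : Finset (Finset α)) (hE : ∅ ∉ E) (K : ℕ) :
    (K + 1) * E.card + ∑ k ∈ Icc 1 K, k * (Fintype.card α).choose k ≤
      ∑ e ∈ E, e.card + (K + 1) * ∑ k ∈ Icc 1 K, (Fintype.card α).choose k := by
  have hsmall : ∑ s ∈ (univ : Finset (Finset α)).filter (fun s => s.card ∈ Icc 1 K),
      ((s.card : ℤ) - (K + 1)) ≤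
        ∑ e ∈ E.filter (fun e => e.card ≤ K), ((e.card : ℤ) - (K + 1)) := by
    refine sum_le_sum_of_subset_of_nonpos' (fun e he => ?_) fun s hs _ => ?_
    · obtain ⟨heE, heK⟩ := mem_filter.1 he
      have hne : e.Nonempty := nonempty_iff_ne_empty.2 fun h => hE (h ▸ heE)
      exact mem_filter.2 ⟨mem_univ _, mem_Icc.2 ⟨hne.card_pos, heK⟩⟩
    · simp only [mem_filter, mem_univ, true_and, mem_Icc] at hs
      omega
  have hlarge : ∑ e ∈ E.filter (fun e => e.card ≤ K), ((e.card : ℤ) - (K + 1)) ≤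
      ∑ e ∈ E, ((e.card : ℤ) - (K + 1)) := by
    refine sum_le_sum_of_subset_of_nonneg (filter_subset _ _) fun e heE he => ?_
    have : K < e.card := by simpa [heE] using he
    omega
  have key := hsmall.trans hlarge
  rw [sum_filter_card_mem_Icc K fun k => (k : ℤ) - (K + 1)] at key
  simp only [mul_sub, sum_sub_distrib, sum_const, nsmul_eq_mul] at key
  zify
  rw [mul_sum]
  simp only [mul_comm] at key ⊢
  linarith

theorem card_le_boundFormula (E : Finset (Finset α)) (hE : ∅ ∉ E) {N : ℕ}
    (hN : ∑ e ∈ E, e.card ≤ N) : E.card ≤ boundFormula (Fintype.card α) N := by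
  rw [boundFormula]
  set K := imax (Fintype.card α) N
  have hW : ∑ k ∈ Icc 1 K, k * (Fintype.card α).choose k ≤ N :=
    Nat.findGreatest_spec (P := fun K => ∑ k ∈ Icc 1 K, k * (Fintype.card α).choose k ≤ N)
      (Nat.zero_le _) (by simp)
  have hpack := succ_mul_card_add_le E hE K
  have hexcess : E.card - ∑ k ∈ Icc 1 K, (Fintype.card α).choose k ≤
      (N - ∑ k ∈ Icc 1 K, k * (Fintype.card α).choose k) / (K + 1) := by
    rw [Nat.le_div_iff_mul_le (Nat.add_one_pos K), Nat.sub_mul, mul_comm, mul_comm _ (K + 1)]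
    omega
  omega

end Packing

/-- Identifiability with consistent routing (Theorem IV.9): with `m > 1` consistent
routing paths on `n` nodes, setting `N_max = min (Σ_i d_i) (2·m·(m−1))`, the number
of identifiable nodes is at most `min (boundFormula m N_max) n`. -/
theorem identifiable_le_consistent_routing {V : Type*} [Fintype V] [DecidableEq V]
    {m : ℕ} (hm : 1 < m) (p : Fin m → List V) (hnodup : ∀ i, (p i).Nodup)
    (hcons : Consistent p) :
    {v : V | Identifiable p v}.ncard ≤
      min (boundFormula m (min (∑ i, (p i).length) (2 * m * (m - 1))))
        (Fintype.card V) := by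
  classical
  set S := univ.filter (Identifiable p)
  have hS : {v : V | Identifiable p v} = ↑S := by ext; simp [S]
  have hinj : Set.InjOn (encoding p) S := fun _ _ _ hw h =>
    (mem_filter.1 hw).2.eq_of_encoding_eq h
  have hlength : ∑ v ∈ S, (encoding p v).card ≤ ∑ i, (p i).length := by
    rw [sum_card_encoding]
    exact sum_le_sum fun i _ => (card_le_card fun v hv =>
      List.mem_toFinset.2 (mem_filter.1 hv).2).trans (p i).toFinset_card_le
  have hpaths : ∑ v ∈ S, (encoding p v).card ≤ 2 * m * (m - 1) := by
    rw [sum_card_encoding]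
    refine (sum_le_sum fun i _ => card_identifiable_on_path_le hm (hnodup i) hcons _
      fun v hv => ⟨(mem_filter.1 (mem_filter.1 hv).1).2, (mem_filter.1 hv).2⟩).trans_eq ?_
    rw [sum_const, card_univ, Fintype.card_fin, smul_eq_mul]
    ring
  rw [hS, Set.ncard_coe_finset, ← card_image_of_injOn hinj]
  refine le_min ?_ (card_image_le.trans (card_le_univ S))
  simpa using card_le_boundFormula (S.image (encoding p))
    (fun h => by obtain ⟨v, hv, hv0⟩ := mem_image.1 h; exact (mem_filter.1 hv).2.1 hv0)
    ((sum_image hinj).trans_le (le_min hlength hpaths))
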